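/- arXiv:2512.05390 — 2 statements merged into one kernel-verified Lean document; each statement's English description precedes it below -/
import Mathlib

section
/- Let 𝒜 ∈ ℝ^{m×m}, ℬ ∈ ℝ^m, 𝒞 ∈ ℝ^{1×m}, Φ ∈ ℝ^{d×d}, G ∈ ℝ^d with (Φ,G) controllable. Suppose (𝒜,ℬ) is stabilizable and for every λ ∈ σ(Φ) ∩ ℂ₊ the non-resonance condition rank[[𝒜 − λI, ℬ],[𝒞, 0]] = m + 1 holds. Then the cascade pair ([[Φ, G𝒞],[0, 𝒜]], [[0],[ℬ]]) is stabilizable, i.e., rank[[Φ − λI, G𝒞, 0],[0, 𝒜 − λI, ℬ]] = d + m for all λ in the closed right half-plane. -/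
/-!
Let `(u, w)` be a left null vector of the cascade PBH matrix at `μ`, so that `u (Φ - μ) = 0`,
`u G 𝒞 + w (𝒜 - μ) = 0` and `w ℬ = 0`. If `μ ∉ σ(Φ)`, then `u = 0`, and the stabilizability
of `(𝒜, ℬ)` forces `w = 0`. If `μ ∈ σ(Φ)`, then `(w, u G)` is a left null vector of the
non-resonance matrix, so `w = 0` and `u G = 0`, and the controllability of `(Φ, G)` gives `u = 0`.
-/

open Matrix

/-- Complexification of a real matrix. -/
noncomputable def cmap {n m : ℕ} (A : Matrix (Fin n) (Fin m) ℝ) : Matrix (Fin n) (Fin m) ℂ :=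
  A.map (algebraMap ℝ ℂ)

@[simp]
theorem Sum.elim_eq_zero_iff {α β M : Type*} [Zero M] {f : α → M} {g : β → M} :
    Sum.elim f g = 0 ↔ f = 0 ∧ g = 0 := by
  rw [← Sum.elim_zero_zero, Sum.elim_eq_iff]

namespace Matrix

variable {K : Type*} [Field K] {l n ι κ : Type*} [Fintype l] [Fintype n] [Fintype ι]

theorem rank_eq_card_iff_vecMul_eq_zero (M : Matrix l ι K) :
    M.rank = Fintype.card l ↔ ∀ v : l → K, v ᵥ* M = 0 → v = 0 := by
  refine Iff.trans ?_ (injective_iff_map_eq_zero M.vecMulLinear)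
  rw [coe_vecMulLinear, vecMul_injective_iff]
  refine ⟨fun h => ?_, LinearIndependent.rank_matrix⟩
  rw [linearIndependent_iff_card_eq_finrank_span, Set.finrank, ← rank_eq_finrank_span_row, h]

theorem isUnit_sub_smul_one_of_notMem_spectrum [DecidableEq l] {P : Matrix l l K} {μ : K}
    (h : μ ∉ spectrum K P) : IsUnit (P - μ • 1) := by
  simpa [Algebra.algebraMap_eq_smul_one, neg_sub] using (spectrum.notMem_iff.mp h).neg

variable {P : Matrix l l K} {G : Matrix l ι K} {C : Matrix ι n K} {Q : Matrix n n K}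
  {B : Matrix n κ K}

theorem vecMul_cascade_eq_zero_iff (u : l → K) (w : n → K) :
    Sum.elim u w ᵥ* fromCols (fromBlocks P (G * C) 0 Q) (fromRows 0 B) = 0 ↔
      u ᵥ* P = 0 ∧ u ᵥ* (G * C) + w ᵥ* Q = 0 ∧ w ᵥ* B = 0 := by
  simp [vecMul_fromCols, vecMul_fromBlocks, and_assoc]

theorem eq_zero_of_vecMul_cascade_eq_zero_of_isUnit [DecidableEq l] (hP : IsUnit P)
    (hQB : ∀ w : n → K, w ᵥ* fromCols Q B = 0 → w = 0) (v : l ⊕ n → K)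
    (hv : v ᵥ* fromCols (fromBlocks P (G * C) 0 Q) (fromRows 0 B) = 0) : v = 0 := by
  obtain ⟨u, w, rfl⟩ : ∃ u w, v = Sum.elim u w := ⟨_, _, (Sum.elim_comp_inl_inr v).symm⟩
  obtain ⟨hu, hGCQ, hwB⟩ := (vecMul_cascade_eq_zero_iff u w).1 hv
  obtain rfl : u = 0 := vecMul_injective_iff_isUnit.2 hP (hu.trans (zero_vecMul P).symm)
  obtain rfl : w = 0 := hQB w (by simpa [vecMul_fromCols, hwB] using hGCQ)
  exact Sum.elim_zero_zero

theorem eq_zero_of_vecMul_cascade_eq_zero_of_nonresonant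
    (hPG : ∀ u : l → K, u ᵥ* fromCols P G = 0 → u = 0)
    (hQBC : ∀ z : n ⊕ ι → K, z ᵥ* fromBlocks Q B C 0 = 0 → z = 0) (v : l ⊕ n → K)
    (hv : v ᵥ* fromCols (fromBlocks P (G * C) 0 Q) (fromRows 0 B) = 0) : v = 0 := by
  obtain ⟨u, w, rfl⟩ : ∃ u w, v = Sum.elim u w := ⟨_, _, (Sum.elim_comp_inl_inr v).symm⟩
  obtain ⟨hu, hGCQ, hwB⟩ := (vecMul_cascade_eq_zero_iff u w).1 hv
  have hz := hQBC (Sum.elim w (u ᵥ* G)) (by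
    simp [vecMul_fromBlocks, vecMul_vecMul, hwB, add_comm (w ᵥ* Q), hGCQ])
  obtain ⟨rfl, huG⟩ := Sum.elim_eq_zero_iff.1 hz
  obtain rfl : u = 0 := hPG u (by simp [vecMul_fromCols, hu, huG])
  exact Sum.elim_zero_zero

end Matrix

/-- Stabilizability of the cascade of a controllable internal model `(Φ, G)`
driven by the output `𝒞` of a stabilizable plant `(𝒜, ℬ)` under the
non-resonance condition (Lemma 6). -/
theorem cascade_stabilizable
    {d m : ℕ} (Φ : Matrix (Fin d) (Fin d) ℝ) (G : Matrix (Fin d) (Fin 1) ℝ)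
    (A : Matrix (Fin m) (Fin m) ℝ) (B : Matrix (Fin m) (Fin 1) ℝ)
    (Cm : Matrix (Fin 1) (Fin m) ℝ)
    (hctrb : ∀ μ : ℂ, (Matrix.fromCols (cmap Φ - μ • 1) (cmap G)).rank = d)
    (hstab : ∀ μ : ℂ, 0 ≤ μ.re → (Matrix.fromCols (cmap A - μ • 1) (cmap B)).rank = m)
    (hnonres : ∀ μ ∈ spectrum ℂ (cmap Φ), 0 ≤ μ.re →
      (Matrix.fromBlocks (cmap A - μ • 1) (cmap B) (cmap Cm) 0).rank = m + 1) :
    ∀ μ : ℂ, 0 ≤ μ.re →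
      (Matrix.fromCols
        (Matrix.fromBlocks (cmap Φ - μ • 1) (cmap G * cmap Cm) 0 (cmap A - μ • 1))
        (Matrix.fromRows (0 : Matrix (Fin d) (Fin 1) ℂ) (cmap B))).rank = d + m := by
  intro μ hμ
  refine ((rank_eq_card_iff_vecMul_eq_zero _).2 ?_).trans (by simp)
  by_cases hres : μ ∈ spectrum ℂ (cmap Φ)
  · exact eq_zero_of_vecMul_cascade_eq_zero_of_nonresonant
      ((rank_eq_card_iff_vecMul_eq_zero _).1 (by simpa using hctrb μ))
      ((rank_eq_card_iff_vecMul_eq_zero _).1 (by simpa using hnonres μ hres hμ))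
  · exact eq_zero_of_vecMul_cascade_eq_zero_of_isUnit
      (isUnit_sub_smul_one_of_notMem_spectrum hres)
      ((rank_eq_card_iff_vecMul_eq_zero _).1 (by simpa using hstab μ hμ))
end

section
/- Let A ∈ ℝ^{n×n}, B ∈ ℝ^n, C ∈ ℝ^{1×n}, and let Π₁, Π₂ ∈ ℝ^{n×n} satisfy Π₁F = (A − Π₁LC)Π₁, Π₂F = (A − Π₁LC)Π₂, Π₂L = B, with H₁ = CΠ₁, H₂ = CΠ₂. Consider the filters ζ̇_y = Fζ_y + Ly, ζ̇_u = Fζ_u + Lu with y = Cx, ẋ = Ax + Bu. Then the signal ρ(t) := x(t) − Π₁ζ_y(t) − Π₂ζ_u(t) satisfies ρ̇ = (A − Π₁LC)ρ; in particular, if x(0) = Π₁ζ_y(0) + Π₂ζ_u(0) then x(t) = Π₁ζ_y(t) + Π₂ζ_u(t) for all t ≥ 0. -/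
open Matrix

/-!
Differentiating `ρ`, the intertwining relations turn `Π₁Fζ_y + Π₂Fζ_u` into `(A − Π₁LC)(Π₁ζ_y + Π₂ζ_u)`,
the measurement term `(Cx)Π₁L` of `Π₁ζ̇_y` is exactly the `−Π₁LC x` part of `(A − Π₁LC)x`, and
`Π₂L = B` cancels the input `u`. Invariance then follows from uniqueness for the linear ODE
`ρ̇ = (A − Π₁LC)ρ` with `ρ(0) = 0`.
-/

theorem HasDerivAt.matrix_mulVec {𝕜 : Type*} [NontriviallyNormedField 𝕜] [CompleteSpace 𝕜]
    {ι κ : Type*} [Fintype ι] [Fintype κ] (M : Matrix κ ι 𝕜) {f : 𝕜 → ι → 𝕜} {f' : ι → 𝕜}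
    {t : 𝕜} (hf : HasDerivAt f f' t) :
    HasDerivAt (fun s => M *ᵥ f s) (M *ᵥ f') t :=
  (LinearMap.toContinuousLinearMap M.mulVecLin).hasFDerivAt.comp_hasDerivAt t hf

theorem ContinuousLinearMap.eq_zero_of_hasDerivAt_apply {E : Type*} [NormedAddCommGroup E]
    [NormedSpace ℝ E] (T : E →L[ℝ] E) {f : ℝ → E} (hf : ∀ t, HasDerivAt f (T (f t)) t)
    {t₀ : ℝ} (hf₀ : f t₀ = 0) : f = 0 :=
  ODE_solution_unique_univ (v := fun _ => T) (s := fun _ => Set.univ)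
    (fun _ => T.lipschitz.lipschitzOnWith) (fun t => ⟨hf t, trivial⟩)
    (fun _ => ⟨by simp, trivial⟩) hf₀

theorem transverse_vectorField_eq {R ι : Type*} [CommRing R] [Fintype ι]
    {A F Pi1 Pi2 : Matrix ι ι R} {B L C : ι → R}
    (hPi1 : Pi1 * F = (A - Pi1 * vecMulVec L C) * Pi1)
    (hPi2 : Pi2 * F = (A - Pi1 * vecMulVec L C) * Pi2)
    (hPi2L : Pi2 *ᵥ L = B) (x ζy ζu : ι → R) (u : R) :
    A *ᵥ x + u • B - Pi1 *ᵥ (F *ᵥ ζy + (C ⬝ᵥ x) • L) - Pi2 *ᵥ (F *ᵥ ζu + u • L) =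
      (A - Pi1 * vecMulVec L C) *ᵥ (x - Pi1 *ᵥ ζy - Pi2 *ᵥ ζu) := by
  have hx : (A - Pi1 * vecMulVec L C) *ᵥ x = A *ᵥ x - (C ⬝ᵥ x) • Pi1 *ᵥ L := by
    rw [sub_mulVec, mul_vecMulVec, vecMulVec_mulVec, op_smul_eq_smul]
  simp only [mulVec_sub, mulVec_add, mulVec_smul, mulVec_mulVec, ← hPi1, ← hPi2, hx, hPi2L]
  abel

/-- The transverse coordinate `ρ = x − Π₁ζ_y − Π₂ζ_u` of the filter-based
non-minimal realization evolves autonomously as `ρ̇ = (A − Π₁LC)ρ`; in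
particular the subspace `{x = Π₁ζ_y + Π₂ζ_u}` is invariant. -/
theorem transverse_coordinate_dynamics
    {n : ℕ} (A F Pi1 Pi2 : Matrix (Fin n) (Fin n) ℝ)
    (B L Cv : Fin n → ℝ)
    (hPi1 : Pi1 * F = (A - Pi1 * Matrix.vecMulVec L Cv) * Pi1)
    (hPi2 : Pi2 * F = (A - Pi1 * Matrix.vecMulVec L Cv) * Pi2)
    (hPi2L : Pi2.mulVec L = B)
    (x ζy ζu : ℝ → Fin n → ℝ) (u : ℝ → ℝ)
    (hx : ∀ t, HasDerivAt x (A.mulVec (x t) + u t • B) t)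
    (hζy : ∀ t, HasDerivAt ζy (F.mulVec (ζy t) + (Cv ⬝ᵥ x t) • L) t)
    (hζu : ∀ t, HasDerivAt ζu (F.mulVec (ζu t) + u t • L) t) :
    (∀ t, HasDerivAt (fun s => x s - Pi1.mulVec (ζy s) - Pi2.mulVec (ζu s))
      ((A - Pi1 * Matrix.vecMulVec L Cv).mulVec
        (x t - Pi1.mulVec (ζy t) - Pi2.mulVec (ζu t))) t) ∧
    (x 0 = Pi1.mulVec (ζy 0) + Pi2.mulVec (ζu 0) →
      ∀ t ≥ (0 : ℝ), x t = Pi1.mulVec (ζy t) + Pi2.mulVec (ζu t)) := by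
  set ρ : ℝ → Fin n → ℝ := fun s => x s - Pi1 *ᵥ ζy s - Pi2 *ᵥ ζu s with hρ_def
  have hρ : ∀ t, HasDerivAt ρ ((A - Pi1 * vecMulVec L Cv) *ᵥ ρ t) t := fun t =>
    (((hx t).sub ((hζy t).matrix_mulVec Pi1)).sub ((hζu t).matrix_mulVec Pi2)).congr_deriv
      (transverse_vectorField_eq hPi1 hPi2 hPi2L _ _ _ _)
  refine ⟨hρ, fun h₀ t _ => ?_⟩
  have hρ₀ : ρ 0 = 0 := by simp [hρ_def, h₀, sub_sub]
  let T : (Fin n → ℝ) →L[ℝ] Fin n → ℝ :=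
    LinearMap.toContinuousLinearMap (A - Pi1 * vecMulVec L Cv).mulVecLin
  have hρt : ρ t = 0 := congrFun (T.eq_zero_of_hasDerivAt_apply hρ hρ₀) t
  simpa only [hρ_def, sub_sub, sub_eq_zero] using hρt
end
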